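/- In any shortest valid path in the marked cycle, a b-move is never immediately followed by a b-move or a c-move, and a d-move is never immediately followed by an a-move or a d-move, and an a-move is never immediately followed by a b-move, and a c-move is never immediately followed by a d-move. -/
import Mathlib


/-- The four move types in the marked cycle. -/
inductive Move : Type
  | a | b | c | d
deriving DecidableEq

/-- Where a move from node `x` in `ZMod k` leads. -/
def Move.step {k : ℕ} (x : ZMod k) : Move → ZMod k
  | .a => x - 1
  | .b => x
  | .c => x + 1
  | .d => x

/-- The node covered by a move performed from node `x`. -/
def Move.covers {k : ℕ} (x : ZMod k) : Move → ZMod k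
  | .a => x - 1
  | .b => x
  | .c => x
  | .d => x - 1

/-- The node reached after performing a sequence of moves starting at `s`. -/
def endAt {k : ℕ} (s : ZMod k) : List Move → ZMod k
  | [] => s
  | m :: ms => endAt (Move.step s m) ms

/-- The set of nodes covered by a sequence of moves starting at `s`. -/
def coveredSet {k : ℕ} (s : ZMod k) : List Move → Set (ZMod k)
  | [] => ∅
  | m :: ms => insert (Move.covers s m) (coveredSet (Move.step s m) ms)

/-- A valid path in the marked cycle on `ZMod k` with marked set `B`, start `s`,
end `t`: a nonempty sequence of moves from `s` to `t` covering every node of `B`. -/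
def ValidPath {k : ℕ} (B : Set (ZMod k)) (s t : ZMod k) (p : List Move) : Prop :=
  p ≠ [] ∧ endAt s p = t ∧ B ⊆ coveredSet s p

/-- A shortest valid path: valid and of minimum length among all valid paths. -/
def ShortestPath {k : ℕ} (B : Set (ZMod k)) (s t : ZMod k) (p : List Move) : Prop :=
  ValidPath B s t p ∧ ∀ q : List Move, ValidPath B s t q → p.length ≤ q.length

lemma endAt_append {k : ℕ} (s : ZMod k) (u v : List Move) :
    endAt s (u ++ v) = endAt (endAt s u) v := by
  induction u generalizing s with
  | nil => rfl
  | cons m ms ih => simp [endAt, ih]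

lemma coveredSet_append {k : ℕ} (s : ZMod k) (u v : List Move) :
    coveredSet s (u ++ v) = coveredSet s u ∪ coveredSet (endAt s u) v := by
  induction u generalizing s with
  | nil => simp [coveredSet, endAt]
  | cons m ms ih => simp [coveredSet, endAt, ih, Set.insert_union]

lemma replace_pair {k : ℕ} (B : Set (ZMod k)) (s t : ZMod k) (p : List Move)
    (hp : ShortestPath B s t p) (m1 m2 m' : Move)
    (hstep : ∀ x : ZMod k, Move.step (Move.step x m1) m2 = Move.step x m')
    (hc1 : ∀ x : ZMod k, Move.covers x m1 = Move.covers x m')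
    (hc2 : ∀ x : ZMod k, Move.covers (Move.step x m1) m2 = Move.covers x m') :
    ¬ [m1, m2] <:+: p := by
  rintro ⟨u, v, rfl⟩
  obtain ⟨⟨_, hend, hcov⟩, hmin⟩ := hp
  have hq : ValidPath B s t (u ++ m' :: v) := by
    refine ⟨by simp, ?_, ?_⟩
    · simpa [List.append_assoc, endAt_append, endAt, hstep] using hend
    · intro x hx
      have := hcov hx
      simp only [List.append_assoc, coveredSet_append, coveredSet, endAt, hstep, hc1, hc2,
        Set.mem_union, Set.mem_insert_iff, List.cons_append, List.nil_append,
        endAt_append] at this ⊢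
      tauto
  have := hmin _ hq
  simp at this

/-- in a shortest valid path, a b-move is never immediately followed by a
b- or c-move, a d-move is never immediately followed by an a- or d-move, an a-move is
never immediately followed by a b-move, and a c-move is never immediately followed by
a d-move. -/
theorem forbidden_pairs (k : ℕ) (hk : 2 ≤ k) (B : Set (ZMod k)) (s t : ZMod k)
    (p : List Move) (hp : ShortestPath B s t p) :
    ¬ [Move.b, Move.b] <:+: p ∧ ¬ [Move.b, Move.c] <:+: p ∧
    ¬ [Move.d, Move.a] <:+: p ∧ ¬ [Move.d, Move.d] <:+: p ∧
    ¬ [Move.a, Move.b] <:+: p ∧ ¬ [Move.c, Move.d] <:+: p := by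
  refine ⟨replace_pair B s t p hp _ _ Move.b ?_ ?_ ?_,
    replace_pair B s t p hp _ _ Move.c ?_ ?_ ?_,
    replace_pair B s t p hp _ _ Move.a ?_ ?_ ?_,
    replace_pair B s t p hp _ _ Move.d ?_ ?_ ?_,
    replace_pair B s t p hp _ _ Move.a ?_ ?_ ?_,
    replace_pair B s t p hp _ _ Move.c ?_ ?_ ?_⟩ <;>
  intro x <;> simp [Move.step, Move.covers]
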